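/- arXiv:2303.08687 — 2 statements merged into one kernel-verified Lean document; each statement's English description precedes it below -/
import Mathlib

section
/- Let C ⊆ F_{q^m}^n be an F_{q^m}-linear code of dimension k and suppose m is even. Then dim_{F_q} Tr(C ⋆ C^{q^{m/2}}) ≤ (m/2)·k². -/
open Module

/-- The Schur (componentwise) product over `R` of two `R`-submodules of a commutative
`R`-algebra: the `R`-span of the set of products. For codes in `K^n` (with the pointwise
ring structure) this is the usual Schur product `C ⋆ D`. -/
def schurProd (R : Type*) {A : Type*} [CommSemiring R] [CommSemiring A] [Algebra R A]
    (C D : Submodule R A) : Submodule R A :=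
  Submodule.span R {x : A | ∃ c ∈ C, ∃ d ∈ D, x = c * d}

/-- The code `C^r := {(c₁^r, …, c_n^r) : c ∈ C}` of coordinatewise `r`-th powers
(as the span of that set). -/
def powCode {K : Type*} [Field K] {n : ℕ} (C : Submodule K (Fin n → K)) (r : ℕ) :
    Submodule K (Fin n → K) :=
  Submodule.span K {x : Fin n → K | ∃ c ∈ C, x = fun j => c j ^ r}

/-- The trace code `Tr(C)` over `F_q` of an `F_{q^m}`-linear code `C`: the `F_q`-span of the
coordinatewise traces `Tr(c) = (Tr(c₁), …, Tr(c_n))`, where `Tr(x) = x + x^q + ⋯ + x^{q^{m-1}}`. -/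
def traceCode (q m : ℕ) (Fq : Type*) [Field Fq] {Fqm : Type*} [Field Fqm] [Algebra Fq Fqm]
    {n : ℕ} (C : Submodule Fqm (Fin n → Fqm)) : Submodule Fq (Fin n → Fqm) :=
  Submodule.span Fq
    {x : Fin n → Fqm | ∃ c ∈ C, x = fun j => ∑ i ∈ Finset.range m, c j ^ q ^ i}

/-!
Put `N = q^(m/2)` and let `σ` raise every coordinate to the `N`-th power: an involution,
semilinear over the field automorphism `x ↦ x^N`. The code `D = C ⋆ C^N = C ⋆ σ(C)` has dimension
at most `k²` and is `σ`-stable, and the trace is `σ`-invariant, so the trace map kills `(1 - σ)D`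
and `dim Tr(D) ≤ dim_{F_q} D^σ`. Writing a fixed vector in an `F_{q^m}`-basis made of fixed
vectors, its coordinates satisfy `a^N = a`; there are at most `N` such `a`, so
`|D^σ| ≤ N^(dim D)`, i.e. `dim_{F_q} D^σ ≤ (m/2) · dim D ≤ (m/2) · k²`.
-/

theorem schurProd_eq_mul {R A : Type*} [CommSemiring R] [CommSemiring A] [Algebra R A]
    (C D : Submodule R A) : schurProd R C D = C * D := by
  rw [Submodule.mul_eq_span_mul_set, schurProd]
  congr 1
  ext x
  simp [Set.mem_mul, eq_comm]

theorem Submodule.finrank_mul_le {K A : Type*} [Field K] [Ring A] [Algebra K A]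
    (M N : Submodule K A) [FiniteDimensional K M] [FiniteDimensional K N] :
    finrank K ↥(M * N) ≤ finrank K M * finrank K N := by
  rw [← Submodule.mulMap_range, ← Module.finrank_tensorProduct]
  exact LinearMap.finrank_range_le _

theorem Submodule.finrank_map_semilinear_le {K L V W : Type*} [DivisionRing K] [DivisionRing L]
    [AddCommGroup V] [Module K V] [AddCommGroup W] [Module L W] {τ : K →+* L}
    [RingHomSurjective τ] (f : V →ₛₗ[τ] W) (p : Submodule K V) [FiniteDimensional K p] :
    finrank L (p.map f) ≤ finrank K p := by
  let b := Module.finBasis K p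
  have hp : p = Submodule.span K (Set.range (p.subtype ∘ b)) := by
    rw [Set.range_comp, ← Submodule.map_span, b.span_eq, Submodule.map_top, Submodule.range_subtype]
  have hmap : p.map f = Submodule.span L (Set.range (f ∘ p.subtype ∘ b)) := by
    rw [Set.range_comp, ← Submodule.map_span, ← hp]
  rw [hmap]
  exact (finrank_range_le_card _).trans_eq (Fintype.card_fin _)

theorem Submodule.finrank_map_le_finrank_inf_ker {K V W : Type*} [Field K] [AddCommGroup V]
    [Module K V] [AddCommGroup W] [Module K W] (S : Submodule K V) [FiniteDimensional K S]
    (T : V →ₗ[K] W) (g : V →ₗ[K] V) (hgS : ∀ x ∈ S, g x ∈ S) (hTg : ∀ x ∈ S, T (g x) = 0) :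
    finrank K (S.map T) ≤ finrank K ↥(S ⊓ LinearMap.ker g) := by
  have hT := (T.domRestrict S).finrank_range_add_finrank_ker
  have hg := (g.restrict hgS).finrank_range_add_finrank_ker
  have hle : LinearMap.range (g.restrict hgS) ≤ LinearMap.ker (T.domRestrict S) := by
    rintro _ ⟨x, rfl⟩
    exact hTg x x.2
  have := Submodule.finrank_mono hle
  have hker : LinearMap.ker (g.restrict hgS) = (S ⊓ LinearMap.ker g).comap S.subtype := by
    ext x
    simp [LinearMap.restrict_apply, Subtype.ext_iff]
  rw [hker, (Submodule.comapSubtypeEquivOfLe inf_le_left).finrank_eq] at hg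
  rw [LinearMap.range_domRestrict] at hT
  omega

theorem Submodule.natCard_fixedPoints_le {K V : Type*} [Field K] [Finite K] [AddCommGroup V]
    [Module K V] {τ : K →+* K} (σ : V →ₛₗ[τ] V) (D : Submodule K V) [FiniteDimensional K D] :
    Nat.card {v // v ∈ D ∧ σ v = v} ≤ Nat.card {a : K // τ a = a} ^ finrank K D := by
  let F : Set V := {v | v ∈ D ∧ σ v = v}
  obtain ⟨t, htF, htspan, htind⟩ := exists_linearIndependent K F
  have : Finite D := Module.finite_of_finite K
  have : Finite t := (Set.toFinite (D : Set V)).subset fun v hv => (htF hv).1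
  have : Fintype t := Fintype.ofFinite t
  have hσt : ∀ i : t, σ i = i := fun i => (htF i.2).2
  have hcard_t : Nat.card t ≤ finrank K D := by
    have hle : Submodule.span K t ≤ D := Submodule.span_le.2 fun v hv => (htF hv).1
    rw [Nat.card_eq_fintype_card, ← Set.toFinset_card, ← finrank_span_set_eq_card htind]
    exact Submodule.finrank_mono hle
  -- a fixed vector has fixed coordinates in the basis `t` of the span of all fixed vectors
  let combo : (t → {a : K // τ a = a}) → {v // v ∈ D ∧ σ v = v} := fun c =>
    ⟨∑ i, (c i : K) • (i : V),
      D.sum_mem fun i _ => D.smul_mem _ (htF i.2).1, by simp [(c _).2, hσt]⟩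
  have hcombo : Function.Surjective combo := by
    rintro ⟨v, hv⟩
    have hvt : v ∈ Submodule.span K (Set.range ((↑) : t → V)) := by
      rw [Subtype.range_coe, htspan]
      exact Submodule.subset_span hv
    obtain ⟨c, rfl⟩ := (Submodule.mem_span_range_iff_exists_fun K).1 hvt
    have hc : ∀ i, τ (c i) = c i := by
      have h0 : ∑ i, (τ (c i) - c i) • (i : V) = 0 := by
        simpa [sub_smul, Finset.sum_sub_distrib, hσt, sub_eq_zero] using hv.2
      exact fun i => sub_eq_zero.1 (Fintype.linearIndependent_iff.1 htind _ h0 i)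
    exact ⟨fun i => ⟨c i, hc i⟩, rfl⟩
  calc Nat.card {v // v ∈ D ∧ σ v = v}
      ≤ Nat.card (t → {a : K // τ a = a}) := Nat.card_le_card_of_surjective combo hcombo
    _ = Nat.card {a : K // τ a = a} ^ Nat.card t := Nat.card_fun
    _ ≤ Nat.card {a : K // τ a = a} ^ finrank K D :=
        Nat.pow_le_pow_right (Nat.card_pos_iff.2 ⟨⟨0, map_zero τ⟩, inferInstance⟩) hcard_t

open Polynomial in
theorem natCard_pow_eq_self_le (K : Type*) [Field K] {N : ℕ} (hN : 1 < N) :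
    Nat.card {a : K // a ^ N = a} ≤ N := by
  classical
  have hP : (X ^ N - X : K[X]) ≠ 0 := FiniteField.X_pow_card_sub_X_ne_zero K hN
  calc Nat.card {a : K // a ^ N = a}
      = (X ^ N - X : K[X]).roots.toFinset.card := by
        rw [← Nat.card_eq_finsetCard]
        exact Nat.card_congr <| Equiv.subtypeEquivRight fun a => by
          simp [mem_roots hP, sub_eq_zero]
    _ ≤ Multiset.card (X ^ N - X : K[X]).roots := Multiset.toFinset_card_le _
    _ ≤ (X ^ N - X : K[X]).natDegree := card_roots' _
    _ = N := FiniteField.X_pow_card_sub_X_natDegree_eq K hN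

def RingHom.compLeftₛₗ {R S : Type*} [Semiring R] [Semiring S] (τ : R →+* S) (ι : Type*) :
    (ι → R) →ₛₗ[τ] (ι → S) where
  toFun x i := τ (x i)
  map_add' x y := funext fun i => map_add τ (x i) (y i)
  map_smul' a x := funext fun i => map_mul τ a (x i)

@[simp]
theorem RingHom.compLeftₛₗ_apply {R S : Type*} [Semiring R] [Semiring S] (τ : R →+* S)
    {ι : Type*} (x : ι → R) (i : ι) : τ.compLeftₛₗ ι x i = τ (x i) := rfl

theorem powCode_eq_map {K : Type*} [Field K] {n : ℕ} (C : Submodule K (Fin n → K)) {r : ℕ}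
    (τ : K →+* K) [RingHomSurjective τ] (hτ : ∀ a, τ a = a ^ r) :
    powCode C r = C.map (τ.compLeftₛₗ (Fin n)) := by
  have hσ : ∀ c, τ.compLeftₛₗ (Fin n) c = fun j => c j ^ r := fun c => funext fun j => hτ (c j)
  rw [powCode, ← Submodule.span_eq (C.map _), Submodule.map_coe]
  congr 1
  ext x
  simp [hσ, eq_comm]

theorem traceCode_eq_map (Fq : Type*) {Fqm : Type*} [Field Fq] [Field Fqm] [Finite Fqm]
    [Algebra Fq Fqm] {n : ℕ} (C : Submodule Fqm (Fin n → Fqm)) :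
    traceCode (Nat.card Fq) (finrank Fq Fqm) Fq C =
      (C.restrictScalars Fq).map
        (LinearMap.compLeft (Algebra.linearMap Fq Fqm ∘ₗ Algebra.trace Fq Fqm) (Fin n)) := by
  have hT : ∀ c : Fin n → Fqm,
      LinearMap.compLeft (Algebra.linearMap Fq Fqm ∘ₗ Algebra.trace Fq Fqm) (Fin n) c =
        fun j => ∑ i ∈ Finset.range (finrank Fq Fqm), c j ^ Nat.card Fq ^ i :=
    fun c => funext fun j => FiniteField.algebraMap_trace_eq_sum_pow Fq Fqm (c j)
  rw [traceCode, ← Submodule.span_eq (Submodule.map _ _), Submodule.map_coe]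
  congr 1
  ext x
  simp [hT, eq_comm]

theorem RingHom.compLeftₛₗ_mem_mul_map {K ι : Type*} [Field K] {τ : K →+* K}
    [RingHomSurjective τ] (hτ : Function.Involutive τ) (C : Submodule K (ι → K)) {x : ι → K}
    (hx : x ∈ C * C.map (τ.compLeftₛₗ ι)) :
    τ.compLeftₛₗ ι x ∈ C * C.map (τ.compLeftₛₗ ι) := by
  refine Submodule.mul_induction_on hx ?_ fun a b ha hb =>
    map_add (τ.compLeftₛₗ ι) a b ▸ add_mem ha hb
  rintro c hc _ ⟨d, hd, rfl⟩
  have hmul : τ.compLeftₛₗ ι (c * τ.compLeftₛₗ ι d) = d * τ.compLeftₛₗ ι c :=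
    funext fun i => by simp [hτ (d i), mul_comm]
  rw [hmul]
  exact Submodule.mul_mem_mul hd ⟨c, hc, rfl⟩

theorem natCard_pow_finrank_traceCode_le {Fq Fqm : Type*} [Field Fq] [Field Fqm] [Finite Fqm]
    [Algebra Fq Fqm] {n : ℕ} (φ : Fqm ≃ₐ[Fq] Fqm) (D : Submodule Fqm (Fin n → Fqm))
    (hD : ∀ x ∈ D, (φ.toRingEquiv : Fqm →+* Fqm).compLeftₛₗ (Fin n) x ∈ D) :
    Nat.card Fq ^ finrank Fq (traceCode (Nat.card Fq) (finrank Fq Fqm) Fq D) ≤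
      Nat.card {a : Fqm // φ a = a} ^ finrank Fqm D := by
  have : Finite Fq := Finite.of_injective _ (algebraMap Fq Fqm).injective
  let σ := (φ.toRingEquiv : Fqm →+* Fqm).compLeftₛₗ (Fin n)
  let Φ := LinearMap.compLeft φ.toLinearMap (Fin n)
  let T := LinearMap.compLeft (Algebra.linearMap Fq Fqm ∘ₗ Algebra.trace Fq Fqm) (Fin n)
  let D' := D.restrictScalars Fq
  have hTΦ : ∀ x, T (Φ x) = T x := fun x => funext fun j =>
    congrArg (algebraMap Fq Fqm) (Algebra.trace_eq_of_algEquiv φ (x j))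
  have hrank : finrank Fq (D'.map T) ≤ finrank Fq ↥(D' ⊓ LinearMap.ker (LinearMap.id - Φ)) :=
    D'.finrank_map_le_finrank_inf_ker T _ (fun x hx => D.sub_mem hx (hD x hx))
      (fun x _ => by simp [hTΦ])
  have hfix : Nat.card ↥(D' ⊓ LinearMap.ker (LinearMap.id - Φ)) = Nat.card {v // v ∈ D ∧ σ v = v} :=
    Nat.card_congr <| Equiv.subtypeEquivRight fun v => by
      simp only [D', Φ, σ, Submodule.mem_inf, Submodule.restrictScalars_mem, LinearMap.mem_ker,
        LinearMap.sub_apply, LinearMap.id_apply, sub_eq_zero, funext_iff, RingHom.compLeftₛₗ_apply]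
      simp [eq_comm]
  rw [traceCode_eq_map]
  calc Nat.card Fq ^ finrank Fq (D'.map T)
      ≤ Nat.card Fq ^ finrank Fq ↥(D' ⊓ LinearMap.ker (LinearMap.id - Φ)) :=
        Nat.pow_le_pow_right Nat.card_pos hrank
    _ = Nat.card {v // v ∈ D ∧ σ v = v} := by rw [← hfix]; exact Module.natCard_eq_pow_finrank.symm
    _ ≤ Nat.card {a : Fqm // φ a = a} ^ finrank Fqm D := D.natCard_fixedPoints_le σ

/-- For an `F_{q^m}`-linear code `C ⊆ F_{q^m}^n` of dimension `k`, with `m` even,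
`dim_{F_q} Tr(C ⋆ C^{q^{m/2}}) ≤ (m/2)·k²`. -/
theorem stmt_3 (q m n : ℕ) (hm : 0 < m) (hme : Even m) (Fq Fqm : Type*) [Field Fq] [Field Fqm]
    [Fintype Fq] [Fintype Fqm] [Algebra Fq Fqm]
    (hq : Fintype.card Fq = q) (hqm : Fintype.card Fqm = q ^ m)
    (C : Submodule Fqm (Fin n → Fqm)) (k : ℕ) (hk : finrank Fqm C = k) :
    finrank Fq (traceCode q m Fq (schurProd Fqm C (powCode C (q ^ (m / 2))))) ≤
      m / 2 * k ^ 2 := by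
  obtain ⟨h, rfl⟩ := hme
  rw [show (h + h) / 2 = h by omega]
  have hq1 : 1 < q := hq ▸ Fintype.one_lt_card
  have hdeg : finrank Fq Fqm = h + h := by
    have hcard := Module.card_eq_pow_finrank (K := Fq) (V := Fqm)
    rw [hq, hqm] at hcard
    exact Nat.pow_right_injective hq1 hcard.symm
  let φ : Fqm ≃ₐ[Fq] Fqm := FiniteField.frobeniusAlgEquivOfAlgebraic Fq Fqm ^ h
  have hφ : ∀ a, φ a = a ^ q ^ h := fun a => by
    rw [AlgEquiv.coe_pow, FiniteField.coe_frobeniusAlgEquivOfAlgebraic_iterate, hq]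
  have hφφ : Function.Involutive φ := fun a => by
    rw [hφ, hφ, ← pow_mul, ← pow_add, ← hqm, FiniteField.pow_card]
  let τ : Fqm →+* Fqm := φ.toRingEquiv
  let D := C * C.map (τ.compLeftₛₗ (Fin n))
  have hD : schurProd Fqm C (powCode C (q ^ h)) = D := by
    rw [schurProd_eq_mul, powCode_eq_map C τ hφ]
  have hdimD : finrank Fqm D ≤ k ^ 2 := by
    refine (Submodule.finrank_mul_le _ _).trans ?_
    rw [sq, ← hk]
    exact Nat.mul_le_mul_left _ (C.finrank_map_semilinear_le _)
  have hfix : Nat.card Fq ^ finrank Fq (traceCode (Nat.card Fq) (finrank Fq Fqm) Fq D) ≤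
      Nat.card {a : Fqm // φ a = a} ^ finrank Fqm D :=
    natCard_pow_finrank_traceCode_le φ D fun x hx => τ.compLeftₛₗ_mem_mul_map hφφ C hx
  have hE : Nat.card {a : Fqm // φ a = a} ≤ q ^ h := by
    simpa only [hφ] using natCard_pow_eq_self_le Fqm (Nat.one_lt_pow (by omega) hq1)
  rw [Nat.card_eq_fintype_card, hq, hdeg] at hfix
  rw [hD, ← Nat.pow_le_pow_iff_right hq1, pow_mul]
  refine hfix.trans ?_
  calc Nat.card {a : Fqm // φ a = a} ^ finrank Fqm D ≤ (q ^ h) ^ finrank Fqm D :=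
        Nat.pow_le_pow_left hE _
    _ ≤ (q ^ h) ^ k ^ 2 := Nat.pow_le_pow_right (by positivity) hdimD
end

section
/- Let C ⊆ F_{q^m}^n be an F_{q^m}-linear code of dimension k, and suppose dim_{F_q} Tr(C) = m·k. Then dim_{F_q} Tr(C)^{⋆2} − (mk+1)mk/2 ≤ m·(dim_{F_{q^m}}(C^{⋆2}) − k(k+1)/2), i.e. dim_{F_q} Tr(C)^{⋆2} − C(mk+1, 2) ≤ m·(dim_{F_{q^m}}(C^{⋆2}) − C(k+1, 2)) as an inequality of integers. -/
open Module

open Module Finset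

set_option linter.unusedSectionVars false
section aux
variable {q m n : ℕ} {Fq : Type*} {Fqm : Type*} [Field Fq] [Field Fqm]
  [Fintype Fq] [Fintype Fqm] [Algebra Fq Fqm]

lemma exists_char (hq : Fintype.card Fq = q) :
    ∃ p e : ℕ, p.Prime ∧ q = p ^ e ∧ CharP Fqm p := by
  have hc : CharP Fq (ringChar Fq) := ringChar.charP Fq
  have hp : (ringChar Fq).Prime := CharP.char_is_prime Fq (ringChar Fq)
  obtain ⟨e, _, hcard⟩ := FiniteField.card Fq (ringChar Fq)
  exact ⟨ringChar Fq, e, hp, by rw [← hq, hcard],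
    charP_of_injective_algebraMap (algebraMap Fq Fqm).injective _⟩

lemma qpow_add_dist (hq : Fintype.card Fq = q) (x y : Fqm) (i : ℕ) :
    (x + y) ^ q ^ i = x ^ q ^ i + y ^ q ^ i := by
  obtain ⟨p, e, hp, rfl, hchar⟩ := exists_char (Fqm := Fqm) hq
  haveI := hchar
  haveI : Fact p.Prime := ⟨hp⟩
  rw [← pow_mul]
  exact add_pow_char_pow x y p (e*i)

lemma algebraMap_qpow (hq : Fintype.card Fq = q) (a : Fq) (i : ℕ) :
    (algebraMap Fq Fqm a) ^ q ^ i = algebraMap Fq Fqm a := by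
  rw [← map_pow]
  congr 1
  rw [← hq]
  exact FiniteField.pow_card_pow i a


variable (Fq Fqm q n) in
/-- The coordinatewise `q^l`-power map as an `F_q`-linear map. -/
noncomputable def frobL (hq : Fintype.card Fq = q) (l : ℕ) :
    (Fin n → Fqm) →ₗ[Fq] (Fin n → Fqm) where
  toFun c := fun j => c j ^ q ^ l
  map_add' x y := by
    funext j
    exact qpow_add_dist hq (x j) (y j) l
  map_smul' a c := by
    funext j
    show (a • c j) ^ q ^ l = a • (c j ^ q ^ l)
    rw [Algebra.smul_def, Algebra.smul_def, mul_pow, algebraMap_qpow hq]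

@[simp] lemma frobL_apply (hq : Fintype.card Fq = q) (l : ℕ) (c : Fin n → Fqm) (j : Fin n) :
    frobL q n Fq Fqm hq l c j = c j ^ q ^ l := rfl

variable (Fq Fqm q n) in
/-- partial trace map `c ↦ (∑_{i<h} c_j^{q^i})_j` as an `F_q`-linear map. -/
noncomputable def trP (hq : Fintype.card Fq = q) (h : ℕ) :
    (Fin n → Fqm) →ₗ[Fq] (Fin n → Fqm) :=
  ∑ i ∈ range h, frobL q n Fq Fqm hq i

lemma trP_apply (hq : Fintype.card Fq = q) (h : ℕ) (c : Fin n → Fqm) (j : Fin n) :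
    trP q n Fq Fqm hq h c j = ∑ i ∈ range h, c j ^ q ^ i := by
  simp [trP, LinearMap.sum_apply, Finset.sum_apply]

section hqm

lemma qpow_m (hqm : Fintype.card Fqm = q ^ m) (x : Fqm) : x ^ q ^ m = x := by
  rw [← hqm]; exact FiniteField.pow_card x

lemma sum_shift_one (hqm : Fintype.card Fqm = q ^ m) (x : Fqm) :
    ∑ i ∈ range m, x ^ q ^ (i + 1) = ∑ i ∈ range m, x ^ q ^ i := by
  have h1 : ∑ i ∈ range (m + 1), x ^ q ^ i
      = ∑ i ∈ range m, x ^ q ^ (i + 1) + x ^ q ^ 0 := Finset.sum_range_succ' _ _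
  have h2 : ∑ i ∈ range (m + 1), x ^ q ^ i
      = ∑ i ∈ range m, x ^ q ^ i + x ^ q ^ m := Finset.sum_range_succ _ _
  rw [h1] at h2
  simpa [qpow_m hqm x] using h2

lemma sum_shift (hqm : Fintype.card Fqm = q ^ m) (u : ℕ) (x : Fqm) :
    ∑ i ∈ range m, x ^ q ^ (i + u) = ∑ i ∈ range m, x ^ q ^ i := by
  induction u generalizing x with
  | zero => simp
  | succ u ih =>
    calc ∑ i ∈ range m, x ^ q ^ (i + (u + 1))
        = ∑ i ∈ range m, (x ^ q) ^ q ^ (i + u) := by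
          refine Finset.sum_congr rfl fun i _ => ?_
          rw [show q ^ (i + (u + 1)) = q * q ^ (i + u) by
            rw [Nat.add_succ, pow_succ, Nat.mul_comm], pow_mul]
      _ = ∑ i ∈ range m, (x ^ q) ^ q ^ i := ih _
      _ = ∑ i ∈ range m, x ^ q ^ (i + 1) := by
          refine Finset.sum_congr rfl fun i _ => ?_
          rw [← pow_mul, ← pow_succ']
      _ = ∑ i ∈ range m, x ^ q ^ i := sum_shift_one hqm x

lemma tr_mul_tr (hqm : Fintype.card Fqm = q ^ m) (a b : Fqm) :
    (∑ i ∈ range m, a ^ q ^ i) * (∑ i ∈ range m, b ^ q ^ i)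
      = ∑ l ∈ range m, ∑ i ∈ range m, (a * b ^ q ^ l) ^ q ^ i := by
  have key : ∀ l i : ℕ, (a * b ^ q ^ l) ^ q ^ i = a ^ q ^ i * b ^ q ^ (l + i) := by
    intro l i
    rw [mul_pow, ← pow_mul, ← pow_add]
  symm
  calc ∑ l ∈ range m, ∑ i ∈ range m, (a * b ^ q ^ l) ^ q ^ i
      = ∑ l ∈ range m, ∑ i ∈ range m, a ^ q ^ i * b ^ q ^ (l + i) := by simp only [key]
    _ = ∑ i ∈ range m, ∑ l ∈ range m, a ^ q ^ i * b ^ q ^ (l + i) := Finset.sum_comm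
    _ = ∑ i ∈ range m, a ^ q ^ i * ∑ l ∈ range m, b ^ q ^ (l + i) := by
        simp [Finset.mul_sum]
    _ = ∑ i ∈ range m, a ^ q ^ i * ∑ l ∈ range m, b ^ q ^ l := by
        refine Finset.sum_congr rfl fun i _ => ?_
        rw [sum_shift hqm i b]
    _ = _ := (Finset.sum_mul _ _ _).symm

lemma trP_frobL (hq : Fintype.card Fq = q) (hqm : Fintype.card Fqm = q ^ m)
    (u : ℕ) (c : Fin n → Fqm) :
    trP q n Fq Fqm hq m (frobL q n Fq Fqm hq u c) = trP q n Fq Fqm hq m c := by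
  funext j
  rw [trP_apply, trP_apply]
  calc ∑ i ∈ range m, (c j ^ q ^ u) ^ q ^ i
      = ∑ i ∈ range m, c j ^ q ^ (i + u) := by
        refine Finset.sum_congr rfl fun i _ => ?_
        rw [← pow_mul, ← pow_add, Nat.add_comm]
    _ = _ := sum_shift hqm u (c j)

end hqm
section helpers

lemma smul_mem_span_basisSmul {ι : Type*} [Fintype ι] (β : Basis ι Fq Fqm)
    (S : Set (Fin n → Fqm)) :
    ∀ x ∈ Submodule.span Fqm S, ∀ γ : Fqm,
      γ • x ∈ Submodule.span Fq {y | ∃ (i : ι) (s : Fin n → Fqm), s ∈ S ∧ y = β i • s} := by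
  intro x hx
  refine Submodule.span_induction (p := fun x _ => ∀ γ : Fqm,
    γ • x ∈ Submodule.span Fq {y | ∃ (i : ι) (s : Fin n → Fqm), s ∈ S ∧ y = β i • s})
    ?_ ?_ ?_ ?_ hx
  · intro s hs γ
    rw [← Basis.sum_repr β γ, Finset.sum_smul]
    refine Submodule.sum_mem _ fun i _ => ?_
    rw [smul_assoc]
    exact Submodule.smul_mem _ _ (Submodule.subset_span ⟨i, s, hs, rfl⟩)
  · intro γ; simp
  · intro y z _ _ hy hz γ
    rw [smul_add]
    exact Submodule.add_mem _ (hy γ) (hz γ)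
  · intro a y _ hy γ
    rw [smul_smul]
    exact hy (γ * a)

lemma apply_smul_mem_span {ι ι' : Type*} [Fintype ι] [Fintype ι'] (β : Basis ι Fq Fqm)
    (d : ι' → (Fin n → Fqm)) (L : (Fin n → Fqm) →ₗ[Fq] (Fin n → Fqm))
    (x : Fin n → Fqm) (hx : x ∈ Submodule.span Fqm (Set.range d)) (γ : Fqm) :
    L (γ • x) ∈ Submodule.span Fq (Set.range fun p : ι × ι' => L (β p.1 • d p.2)) := by
  have h1 := smul_mem_span_basisSmul β (Set.range d) x hx γ
  have h2 : L (γ • x) ∈ Submodule.map L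
      (Submodule.span Fq {y | ∃ (i : ι) (s : Fin n → Fqm), s ∈ Set.range d ∧ y = β i • s}) :=
    ⟨γ • x, h1, rfl⟩
  rw [Submodule.map_span] at h2
  refine Submodule.span_le.2 ?_ h2
  rintro y ⟨z, ⟨i, s, ⟨j, rfl⟩, rfl⟩, rfl⟩
  exact Submodule.subset_span ⟨(i, j), rfl⟩

lemma finrank_span_union_le {K V : Type*} [Field K] [AddCommGroup V] [Module K V]
    [FiniteDimensional K V] (A B : Set V) :
    finrank K (Submodule.span K (A ∪ B) : Submodule K V)
      ≤ finrank K (Submodule.span K A : Submodule K V)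
        + finrank K (Submodule.span K B : Submodule K V) := by
  rw [Submodule.span_union]
  have := Submodule.finrank_sup_add_finrank_inf_eq (Submodule.span K A) (Submodule.span K B)
  omega

end helpers
section more
variable (hq : Fintype.card Fq = q)

lemma frobL_mul (l : ℕ) (x y : Fin n → Fqm) :
    frobL q n Fq Fqm hq l (x * y) = frobL q n Fq Fqm hq l x * frobL q n Fq Fqm hq l y := by
  funext j
  exact mul_pow _ _ _

lemma frobL_smulFqm (l : ℕ) (γ : Fqm) (x : Fin n → Fqm) :
    frobL q n Fq Fqm hq l (γ • x) = (γ ^ q ^ l) • frobL q n Fq Fqm hq l x := by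
  funext j
  show (γ * x j) ^ q ^ l = γ ^ q ^ l * x j ^ q ^ l
  exact mul_pow _ _ _

lemma frobL_frobL (a b : ℕ) (x : Fin n → Fqm) :
    frobL q n Fq Fqm hq a (frobL q n Fq Fqm hq b x) = frobL q n Fq Fqm hq (b + a) x := by
  funext j
  show (x j ^ q ^ b) ^ q ^ a = x j ^ q ^ (b + a)
  rw [← pow_mul, ← pow_add]

lemma frobL_cancel (hqm : Fintype.card Fqm = q ^ m) {a b : ℕ} (hab : b + a = m)
    (x : Fin n → Fqm) :
    frobL q n Fq Fqm hq a (frobL q n Fq Fqm hq b x) = x := by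
  rw [frobL_frobL, hab]
  funext j
  exact qpow_m hqm (x j)

variable (q Fq Fqm) in
/-- The `F_q`-subspace of `F_{q^m}` fixed by the `q^h`-power Frobenius. -/
noncomputable def fixedSub (h : ℕ) : Submodule Fq Fqm where
  carrier := {δ : Fqm | δ ^ q ^ h = δ}
  add_mem' := by
    intro a b ha hb
    show (a + b) ^ q ^ h = a + b
    rw [qpow_add_dist hq a b h, ha, hb]
  zero_mem' := by
    show (0 : Fqm) ^ q ^ h = 0
    have : q ≠ 0 := by
      have := Fintype.card_pos (α := Fq); omega
    exact zero_pow (by positivity)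
  smul_mem' := by
    intro a δ hδ
    show (a • δ) ^ q ^ h = a • δ
    rw [Algebra.smul_def, mul_pow, algebraMap_qpow hq, hδ]

lemma mem_fixedSub {h : ℕ} {δ : Fqm} : δ ∈ fixedSub q Fq Fqm hq h ↔ δ ^ q ^ h = δ := Iff.rfl

lemma finrank_fixedSub_le (hone : 1 < q) {h : ℕ} (hh : h ≠ 0) :
    finrank Fq (fixedSub q Fq Fqm hq h) ≤ h := by
  classical
  have hcard : Fintype.card (fixedSub q Fq Fqm hq h) = q ^ finrank Fq (fixedSub q Fq Fqm hq h) := by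
    have := card_eq_pow_finrank (K := Fq) (V := fixedSub q Fq Fqm hq h)
    rwa [hq] at this
  set P : Polynomial Fqm := Polynomial.X ^ q ^ h - Polynomial.X with hP
  have hPne : P ≠ 0 := FiniteField.X_pow_card_pow_sub_X_ne_zero Fqm hh hone
  have hdeg : P.natDegree = q ^ h := FiniteField.X_pow_card_pow_sub_X_natDegree_eq Fqm hh hone
  have e1 : Fintype.card (fixedSub q Fq Fqm hq h)
      = (Finset.univ.filter (fun δ : Fqm => δ ∈ fixedSub q Fq Fqm hq h)).card :=
    Fintype.card_subtype _
  have e2 : Finset.univ.filter (fun δ : Fqm => δ ∈ fixedSub q Fq Fqm hq h)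
      ⊆ P.roots.toFinset := by
    intro δ hδ
    rw [Finset.mem_filter] at hδ
    have h2 : δ ^ q ^ h = δ := hδ.2
    rw [Multiset.mem_toFinset, Polynomial.mem_roots hPne]
    simpa [hP, Polynomial.IsRoot, sub_eq_zero] using h2
  have hle2 : P.roots.toFinset.card ≤ q ^ h := by
    calc P.roots.toFinset.card ≤ Multiset.card P.roots := P.roots.toFinset_card_le
      _ ≤ P.natDegree := P.card_roots'
      _ = q ^ h := hdeg
  have hfin : q ^ finrank Fq (fixedSub q Fq Fqm hq h) ≤ q ^ h := by
    rw [← hcard, e1]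
    exact (Finset.card_le_card e2).trans hle2
  exact (Nat.pow_le_pow_iff_right hone).1 hfin

end more
end aux

set_option maxHeartbeats 1000000 in
/-- For an `F_{q^m}`-linear code `C ⊆ F_{q^m}^n` of dimension `k` with
`dim_{F_q} Tr(C) = m·k`, one has
`dim_{F_q} Tr(C)^{⋆2} − C(mk+1, 2) ≤ m·(dim_{F_{q^m}}(C^{⋆2}) − C(k+1, 2))`
as an inequality of integers. -/
theorem stmt_5 (q m n : ℕ) (hm : 0 < m) (Fq Fqm : Type*) [Field Fq] [Field Fqm]
    [Fintype Fq] [Fintype Fqm] [Algebra Fq Fqm]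
    (hq : Fintype.card Fq = q) (hqm : Fintype.card Fqm = q ^ m)
    (C : Submodule Fqm (Fin n → Fqm)) (k : ℕ) (hk : finrank Fqm C = k)
    (htr : finrank Fq (traceCode q m Fq C) = m * k) :
    (finrank Fq (schurProd Fq (traceCode q m Fq C) (traceCode q m Fq C)) : ℤ)
        - Nat.choose (m * k + 1) 2 ≤
      (m : ℤ) * ((finrank Fqm (schurProd Fqm C C) : ℤ) - Nat.choose (k + 1) 2) := by
  classical
  have hq2 : 1 < q := by rw [← hq]; exact Fintype.one_lt_card
  set M := Fin n → Fqm with hM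
  let trL : M →ₗ[Fq] M := trP q n Fq Fqm hq m
  let fr : ℕ → (M →ₗ[Fq] M) := fun l => frobL q n Fq Fqm hq l
  -- finrank Fq Fqm = m
  have hmFq : finrank Fq Fqm = m := by
    have h1 := card_eq_pow_finrank (K := Fq) (V := Fqm)
    rw [hq, hqm] at h1
    exact Nat.pow_right_injective hq2 h1.symm
  let β : Basis (Fin m) Fq Fqm := (Module.finBasis Fq Fqm).reindex (finCongr hmFq)
  -- spanning family of C
  let bC : Basis (Fin k) Fqm C := (Module.finBasis Fqm C).reindex (finCongr hk)
  let v : Fin k → M := fun t => (bC t : M)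
  have hv : Submodule.span Fqm (Set.range v) = C := by
    have h1 : Set.range v = C.subtype '' Set.range bC := by
      rw [← Set.range_comp]; rfl
    rw [h1, ← Submodule.map_span, Basis.span_eq, Submodule.map_subtype_top]
  -- spanning family of the Schur square of C
  set r := finrank Fqm (schurProd Fqm C C) with hr
  let bD : Basis (Fin r) Fqm (schurProd Fqm C C) := Module.finBasis Fqm _
  let d : Fin r → M := fun i => (bD i : M)
  have hd : Submodule.span Fqm (Set.range d) = schurProd Fqm C C := by
    have h1 : Set.range d = (schurProd Fqm C C).subtype '' Set.range bD := by
      rw [← Set.range_comp]; rfl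
    rw [h1, ← Submodule.map_span, Basis.span_eq, Submodule.map_subtype_top]
  -- the trace code is the image of C under trL
  have hTC : ∀ u ∈ traceCode q m Fq C, ∃ c ∈ C, u = trL c := by
    intro u hu
    have hset : {x : M | ∃ c ∈ C, x = fun j => ∑ i ∈ Finset.range m, c j ^ q ^ i}
        = ⇑trL '' (C : Set M) := by
      ext x
      constructor
      · rintro ⟨c, hc, rfl⟩
        exact ⟨c, hc, by funext j; rw [trP_apply]⟩
      · rintro ⟨c, hc, rfl⟩
        exact ⟨c, hc, by funext j; rw [trP_apply]⟩
    have himg : ⇑trL '' (C : Set M) = ((C.restrictScalars Fq).map trL : Set M) := rfl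
    rw [traceCode, hset, himg, Submodule.span_eq] at hu
    obtain ⟨c, hc, hcu⟩ := hu
    exact ⟨c, hc, hcu.symm⟩
  -- pieces of the spanning set
  let g : ℕ → Fin k → Fin k → M := fun l t t' => v t * fr l (v t')
  let T0 : Set M := Set.range fun p : Fin m × Fin r => trL (β p.1 • d p.2)
  let Tl : ℕ → Set M := fun l =>
    Set.range fun p : Fin m × (Fin k × Fin k) => trL (β p.1 • g l p.2.1 p.2.2)
  let F : Submodule Fq Fqm := fixedSub q Fq Fqm hq (m / 2)
  set f := finrank Fq F with hf
  let bF : Basis (Fin f) Fq F := Module.finBasis Fq F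
  let γb : Fin f → Fqm := fun u => (bF u : Fqm)
  have hγb : Submodule.span Fq (Set.range γb) = F := by
    have h1 : Set.range γb = F.subtype '' Set.range bF := by
      rw [← Set.range_comp]; rfl
    rw [h1, ← Submodule.map_span, Basis.span_eq, Submodule.map_subtype_top]
  let Hmap : Fin k → (Fqm →ₗ[Fq] M) := fun t =>
    (trP q n Fq Fqm hq (m / 2)).comp ((LinearMap.id : Fqm →ₗ[Fq] Fqm).smulRight (g (m / 2) t t))
  let Toff : Set M := Set.range fun p : Fin m × {pp : Fin k × Fin k // pp.1 < pp.2} =>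
    trL (β p.1 • g (m / 2) p.2.1.1 p.2.1.2)
  let Tdiag : Set M := Set.range fun p : Fin k × Fin f => Hmap p.1 (γb p.2)
  let U : Finset ℕ := (Finset.Icc 1 (m / 2)).filter fun l => 2 * l ≠ m
  let Tmid : Set M := if 2 * (m / 2) = m then Toff ∪ Tdiag else ∅
  let Tbig : Set M := T0 ∪ ((⋃ l ∈ U, Tl l) ∪ Tmid)
  -- bilinear expansion of products into the basis family
  have claimBil : ∀ (l : ℕ), ∀ c ∈ C, ∀ c' ∈ C,
      c * fr l c' ∈ Submodule.span Fqm (Set.range fun p : Fin k × Fin k => g l p.1 p.2) := by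
    intro l c hc c' hc'
    rw [← hv] at hc hc'
    have B1 : ∀ y (_ : y ∈ Submodule.span Fqm (Set.range v)), ∀ t : Fin k,
        v t * fr l y ∈ Submodule.span Fqm (Set.range fun p : Fin k × Fin k => g l p.1 p.2) := by
      intro y hy
      refine Submodule.span_induction (p := fun y _ => ∀ t : Fin k,
        v t * fr l y ∈ Submodule.span Fqm (Set.range fun p : Fin k × Fin k => g l p.1 p.2))
        ?_ ?_ ?_ ?_ hy
      · rintro y2 ⟨t', rfl⟩ t
        exact Submodule.subset_span ⟨(t, t'), rfl⟩
      · intro t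
        have e : fr l (0 : M) = 0 := map_zero _
        rw [e, mul_zero]
        exact Submodule.zero_mem _
      · intro y z _ _ hy hz t
        have e : fr l (y + z) = fr l y + fr l z := map_add _ _ _
        rw [e, mul_add]
        exact Submodule.add_mem _ (hy t) (hz t)
      · intro a y _ hy t
        have e : fr l (a • y) = (a ^ q ^ l) • fr l y := frobL_smulFqm hq l a y
        rw [e, mul_smul_comm]
        exact Submodule.smul_mem _ _ (hy t)
    have B2 : ∀ x (_ : x ∈ Submodule.span Fqm (Set.range v)),
        x * fr l c' ∈ Submodule.span Fqm (Set.range fun p : Fin k × Fin k => g l p.1 p.2) := by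
      intro x hx
      refine Submodule.span_induction (p := fun x _ =>
        x * fr l c' ∈ Submodule.span Fqm (Set.range fun p : Fin k × Fin k => g l p.1 p.2))
        ?_ ?_ ?_ ?_ hx
      · rintro x2 ⟨t, rfl⟩
        exact B1 c' hc' t
      · show (0 : M) * fr l c' ∈ Submodule.span Fqm (Set.range fun p : Fin k × Fin k => g l p.1 p.2)
        rw [zero_mul]; exact Submodule.zero_mem _
      · intro y z _ _ hy hz
        show (y + z) * fr l c'
          ∈ Submodule.span Fqm (Set.range fun p : Fin k × Fin k => g l p.1 p.2)
        rw [add_mul]; exact Submodule.add_mem _ hy hz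
      · intro a y _ hy
        show (a • y) * fr l c'
          ∈ Submodule.span Fqm (Set.range fun p : Fin k × Fin k => g l p.1 p.2)
        rw [smul_mul_assoc]
        exact Submodule.smul_mem _ _ hy
    exact B2 c hc
  have claimGeneric : ∀ (l : ℕ), ∀ c ∈ C, ∀ c' ∈ C,
      trL (c * fr l c') ∈ Submodule.span Fq (Tl l) := by
    intro l c hc c' hc'
    have h1 := claimBil l c hc c' hc'
    have h2 := apply_smul_mem_span β (fun p : Fin k × Fin k => g l p.1 p.2) trL _ h1 1
    rw [one_smul] at h2
    exact h2
  have claimOff : ∀ (γ : Fqm) (t t' : Fin k), t < t' →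
      trL (γ • g (m / 2) t t') ∈ Submodule.span Fq Toff := by
    intro γ t t' htt
    have h1 : g (m / 2) t t' ∈ Submodule.span Fqm
        (Set.range fun _ : Unit => g (m / 2) t t') := Submodule.subset_span ⟨(), rfl⟩
    have h2 := apply_smul_mem_span β (fun _ : Unit => g (m / 2) t t') trL _ h1 γ
    refine Submodule.span_mono ?_ h2
    rintro y ⟨⟨s, _⟩, rfl⟩
    exact ⟨(s, ⟨(t, t'), htt⟩), rfl⟩
  have claimMidDiag : 2 * (m / 2) = m → ∀ (γ : Fqm) (t : Fin k),
      trL (γ • g (m / 2) t t) ∈ Submodule.span Fq Tdiag := by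
    intro hm2 γ t
    have hmev : m / 2 + m / 2 = m := by omega
    have hxfix : ∀ j, (g (m / 2) t t) j ^ q ^ (m / 2) = (g (m / 2) t t) j := by
      intro j
      show (v t j * v t j ^ q ^ (m / 2)) ^ q ^ (m / 2) = v t j * v t j ^ q ^ (m / 2)
      rw [mul_pow, ← pow_mul, ← pow_add q (m / 2) (m / 2), hmev, qpow_m hqm (v t j)]
      exact mul_comm _ _
    have hkey : trL (γ • g (m / 2) t t) = Hmap t (γ + γ ^ q ^ (m / 2)) := by
      have e0 : Hmap t (γ + γ ^ q ^ (m / 2))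
          = trP q n Fq Fqm hq (m / 2) ((γ + γ ^ q ^ (m / 2)) • g (m / 2) t t) := rfl
      rw [e0]
      funext j
      rw [trP_apply, trP_apply]
      have e1 : ∀ (δ : Fqm), (δ • g (m / 2) t t) j = δ * (g (m / 2) t t) j := fun _ => rfl
      simp only [e1]
      set A := (g (m / 2) t t) j with hA
      have hAfix : A ^ q ^ (m / 2) = A := hxfix j
      calc ∑ i ∈ Finset.range m, (γ * A) ^ q ^ i
          = ∑ i ∈ Finset.range (m / 2 + m / 2), (γ * A) ^ q ^ i := by rw [hmev]
        _ = ∑ i ∈ Finset.range (m / 2), (γ * A) ^ q ^ i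
            + ∑ i ∈ Finset.range (m / 2), (γ * A) ^ q ^ (m / 2 + i) := by
            rw [Finset.sum_range_add]
        _ = ∑ i ∈ Finset.range (m / 2), (γ * A) ^ q ^ i
            + ∑ i ∈ Finset.range (m / 2), (γ ^ q ^ (m / 2) * A) ^ q ^ i := by
            congr 1
            refine Finset.sum_congr rfl fun i _ => ?_
            rw [pow_add, pow_mul, mul_pow, hAfix]
        _ = ∑ i ∈ Finset.range (m / 2), ((γ + γ ^ q ^ (m / 2)) * A) ^ q ^ i := by
            rw [← Finset.sum_add_distrib]
            refine Finset.sum_congr rfl fun i _ => ?_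
            rw [add_mul, qpow_add_dist hq]
    rw [hkey]
    have hδ : γ + γ ^ q ^ (m / 2) ∈ F := by
      show (γ + γ ^ q ^ (m / 2)) ^ q ^ (m / 2) = γ + γ ^ q ^ (m / 2)
      rw [qpow_add_dist hq, ← pow_mul, ← pow_add q (m / 2) (m / 2), hmev, qpow_m hqm]
      exact add_comm _ _
    rw [← hγb] at hδ
    have h2 : Hmap t (γ + γ ^ q ^ (m / 2))
        ∈ Submodule.map (Hmap t) (Submodule.span Fq (Set.range γb)) := ⟨_, hδ, rfl⟩
    rw [Submodule.map_span] at h2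
    refine Submodule.span_mono ?_ h2
    rintro y ⟨z, ⟨u, rfl⟩, rfl⟩
    exact ⟨(t, u), rfl⟩
  have claimMidPair : 2 * (m / 2) = m → ∀ (γ : Fqm) (t t' : Fin k),
      trL (γ • g (m / 2) t t') ∈ Submodule.span Fq (Toff ∪ Tdiag) := by
    intro hm2 γ t t'
    have hmev : m / 2 + m / 2 = m := by omega
    rcases lt_trichotomy t t' with h | h | h
    · exact Submodule.span_mono Set.subset_union_left (claimOff γ t t' h)
    · subst h
      exact Submodule.span_mono Set.subset_union_right (claimMidDiag hm2 γ t)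
    · have e1 : trL (γ • g (m / 2) t t') = trL (fr (m / 2) (γ • g (m / 2) t t')) :=
        (trP_frobL hq hqm (m / 2) _).symm
      have e2 : fr (m / 2) (γ • g (m / 2) t t')
          = (γ ^ q ^ (m / 2)) • fr (m / 2) (g (m / 2) t t') := frobL_smulFqm hq (m / 2) _ _
      have e3 : fr (m / 2) (g (m / 2) t t') = g (m / 2) t' t := by
        have e4 : fr (m / 2) (g (m / 2) t t')
            = fr (m / 2) (v t) * fr (m / 2) (fr (m / 2) (v t')) := frobL_mul hq (m / 2) _ _
        have e5 : fr (m / 2) (fr (m / 2) (v t')) = v t' := frobL_cancel hq hqm hmev (v t')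
        rw [e4, e5]
        exact mul_comm _ _
      rw [e1, e2, e3]
      exact Submodule.span_mono Set.subset_union_left (claimOff _ t' t h)
  have claimMid : 2 * (m / 2) = m → ∀ (γ : Fqm), ∀ c ∈ C, ∀ c' ∈ C,
      trL (γ • (c * fr (m / 2) c')) ∈ Submodule.span Fq (Toff ∪ Tdiag) := by
    intro hm2 γ c hc c' hc'
    rw [← hv] at hc hc'
    have Q1 : ∀ y (_ : y ∈ Submodule.span Fqm (Set.range v)), ∀ (t : Fin k) (γ : Fqm),
        trL (γ • (v t * fr (m / 2) y)) ∈ Submodule.span Fq (Toff ∪ Tdiag) := by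
      intro y hy
      refine Submodule.span_induction (p := fun y _ => ∀ (t : Fin k) (γ : Fqm),
        trL (γ • (v t * fr (m / 2) y)) ∈ Submodule.span Fq (Toff ∪ Tdiag)) ?_ ?_ ?_ ?_ hy
      · rintro y2 ⟨t', rfl⟩ t γ
        exact claimMidPair hm2 γ t t'
      · intro t γ
        have e : fr (m / 2) (0 : M) = 0 := map_zero _
        rw [e, mul_zero, smul_zero, map_zero]
        exact Submodule.zero_mem _
      · intro y z _ _ hy hz t γ
        have e : fr (m / 2) (y + z) = fr (m / 2) y + fr (m / 2) z := map_add _ _ _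
        rw [e, mul_add, smul_add, map_add]
        exact Submodule.add_mem _ (hy t γ) (hz t γ)
      · intro a y _ hy t γ
        have e : fr (m / 2) (a • y) = (a ^ q ^ (m / 2)) • fr (m / 2) y := frobL_smulFqm hq _ _ _
        rw [e, mul_smul_comm, smul_smul]
        exact hy t (γ * a ^ q ^ (m / 2))
    have Q2 : ∀ x (_ : x ∈ Submodule.span Fqm (Set.range v)), ∀ (γ : Fqm),
        trL (γ • (x * fr (m / 2) c')) ∈ Submodule.span Fq (Toff ∪ Tdiag) := by
      intro x hx
      refine Submodule.span_induction (p := fun x _ => ∀ (γ : Fqm),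
        trL (γ • (x * fr (m / 2) c')) ∈ Submodule.span Fq (Toff ∪ Tdiag)) ?_ ?_ ?_ ?_ hx
      · rintro x2 ⟨t, rfl⟩ γ
        exact Q1 c' hc' t γ
      · intro γ
        show trL (γ • ((0 : M) * fr (m / 2) c')) ∈ Submodule.span Fq (Toff ∪ Tdiag)
        rw [zero_mul, smul_zero, map_zero]
        exact Submodule.zero_mem _
      · intro y z _ _ hy hz γ
        show trL (γ • ((y + z) * fr (m / 2) c')) ∈ Submodule.span Fq (Toff ∪ Tdiag)
        rw [add_mul, smul_add, map_add]
        exact Submodule.add_mem _ (hy γ) (hz γ)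
      · intro a y _ hy γ
        show trL (γ • ((a • y) * fr (m / 2) c')) ∈ Submodule.span Fq (Toff ∪ Tdiag)
        rw [smul_mul_assoc, smul_smul]
        exact hy (γ * a)
    exact Q2 c hc γ
  have claimHalf : ∀ l, 1 ≤ l → l ≤ m / 2 → ∀ c ∈ C, ∀ c' ∈ C,
      trL (c * fr l c') ∈ Submodule.span Fq Tbig := by
    intro l h1 h2 c hc c' hc'
    by_cases hmid : 2 * l = m
    · have hm2 : 2 * (m / 2) = m := by omega
      have hlh : l = m / 2 := by omega
      subst hlh
      have h3 := claimMid hm2 1 c hc c' hc'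
      rw [one_smul] at h3
      refine Submodule.span_mono ?_ h3
      have hTmid : Tmid = Toff ∪ Tdiag := if_pos hm2
      intro y hy
      right; right
      rw [hTmid]
      exact hy
    · have hlU : l ∈ U := by
        show l ∈ (Finset.Icc 1 (m / 2)).filter fun l => 2 * l ≠ m
        rw [Finset.mem_filter, Finset.mem_Icc]
        exact ⟨⟨h1, h2⟩, hmid⟩
      have h3 := claimGeneric l c hc c' hc'
      refine Submodule.span_mono ?_ h3
      intro y hy
      exact Or.inr (Or.inl (Set.mem_biUnion hlU hy))
  have hspan : schurProd Fq (traceCode q m Fq C) (traceCode q m Fq C)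
      ≤ Submodule.span Fq Tbig := by
    rw [schurProd]
    refine Submodule.span_le.2 ?_
    rintro x ⟨u, hu, w, hw, rfl⟩
    obtain ⟨c, hc, rfl⟩ := hTC u hu
    obtain ⟨c', hc', rfl⟩ := hTC w hw
    have etr : ∀ (cc : M) (j : Fin n), trL cc j = ∑ i ∈ Finset.range m, cc j ^ q ^ i :=
      fun cc j => trP_apply hq m cc j
    have hdec : trL c * trL c' = ∑ l ∈ Finset.range m, trL (c * fr l c') := by
      funext j
      rw [Finset.sum_apply]
      show trL c j * trL c' j = ∑ l ∈ Finset.range m, trL (c * fr l c') j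
      simp only [etr]
      have e2 : ∀ (l : ℕ), (c * fr l c') j = c j * c' j ^ q ^ l := fun l => rfl
      simp only [e2]
      exact tr_mul_tr hqm (c j) (c' j)
    show trL c * trL c' ∈ Submodule.span Fq Tbig
    rw [hdec]
    refine Submodule.sum_mem _ fun l hl => ?_
    rcases Nat.eq_zero_or_pos l with rfl | hlpos
    · have e0 : fr 0 c' = c' := by
        funext j
        show c' j ^ q ^ 0 = c' j
        simp
      rw [e0]
      have h1 : c * c' ∈ Submodule.span Fqm (Set.range d) := by
        rw [hd]
        exact Submodule.subset_span ⟨c, hc, c', hc', rfl⟩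
      have h2 := apply_smul_mem_span β d trL _ h1 1
      rw [one_smul] at h2
      refine Submodule.span_mono ?_ h2
      intro y hy
      exact Or.inl hy
    · have hlm : l < m := Finset.mem_range.1 hl
      by_cases hhalf : l ≤ m / 2
      · exact claimHalf l hlpos hhalf c hc c' hc'
      · push_neg at hhalf
        have e1 : trL (c * fr l c') = trL (fr (m - l) (c * fr l c')) :=
          (trP_frobL hq hqm (m - l) _).symm
        have e2 : fr (m - l) (c * fr l c') = fr (m - l) c * fr (m - l) (fr l c') :=
          frobL_mul hq _ _ _
        have e3 : fr (m - l) (fr l c') = c' := frobL_cancel hq hqm (by omega) c'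
        rw [e1, e2, e3, mul_comm]
        exact claimHalf (m - l) (by omega) (by omega) c' hc' c hc
  -- counting
  set Noff := Fintype.card {pp : Fin k × Fin k // pp.1 < pp.2} with hNoffdef
  have hA : finrank Fq (schurProd Fq (traceCode q m Fq C) (traceCode q m Fq C))
      ≤ finrank Fq (Submodule.span Fq Tbig) := Submodule.finrank_mono hspan
  have hT0 : finrank Fq (Submodule.span Fq T0) ≤ m * r := by
    have h0 := finrank_range_le_card (R := Fq) (fun p : Fin m × Fin r => trL (β p.1 • d p.2))
    simpa [Set.finrank] using h0
  have hTlb : ∀ l : ℕ, finrank Fq (Submodule.span Fq (Tl l)) ≤ m * (k * k) := by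
    intro l
    have h0 := finrank_range_le_card (R := Fq)
      (fun p : Fin m × (Fin k × Fin k) => trL (β p.1 • g l p.2.1 p.2.2))
    simpa [Set.finrank] using h0
  have hbiU : ∀ s : Finset ℕ,
      finrank Fq (Submodule.span Fq (⋃ l ∈ s, Tl l)) ≤ s.card * (m * (k * k)) := by
    intro s
    induction s using Finset.induction_on with
    | empty => simp
    | @insert a s ha ih =>
      rw [Finset.set_biUnion_insert]
      refine le_trans (finrank_span_union_le _ _) ?_
      rw [Finset.card_insert_of_notMem ha, Nat.succ_mul]
      have := hTlb a
      linarith [this, ih]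
  have hToffb : finrank Fq (Submodule.span Fq Toff) ≤ m * Noff := by
    have h0 := finrank_range_le_card (R := Fq)
      (fun p : Fin m × {pp : Fin k × Fin k // pp.1 < pp.2} =>
        trL (β p.1 • g (m / 2) p.2.1.1 p.2.1.2))
    have hcardeq : Fintype.card (Fin m × {pp : Fin k × Fin k // pp.1 < pp.2}) = m * Noff := by
      rw [Fintype.card_prod, Fintype.card_fin, hNoffdef]
    exact le_trans h0 (le_of_eq hcardeq)
  have hTdiagb : finrank Fq (Submodule.span Fq Tdiag) ≤ k * f := by
    have h0 := finrank_range_le_card (R := Fq) (fun p : Fin k × Fin f => Hmap p.1 (γb p.2))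
    simpa [Set.finrank] using h0
  have hNoffsum : Noff = ∑ t' : Fin k, (t' : ℕ) := by
    rw [hNoffdef, Fintype.card_subtype]
    rw [Finset.card_eq_sum_card_fiberwise (f := Prod.snd) (t := Finset.univ)
      (fun x _ => Finset.mem_univ _)]
    refine Finset.sum_congr rfl fun t' _ => ?_
    have hmap : ((Finset.univ.filter fun pp : Fin k × Fin k => pp.1 < pp.2).filter
        fun pp => pp.2 = t')
        = (Finset.Iio t').map ⟨fun t => (t, t'), fun a b hab => (Prod.mk.injEq _ _ _ _ ▸ hab).1⟩ := by
      ext pp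
      simp only [Finset.mem_filter, Finset.mem_univ, true_and, Finset.mem_map,
        Finset.mem_Iio, Function.Embedding.coeFn_mk]
      constructor
      · rintro ⟨h1, h2⟩
        exact ⟨pp.1, h2 ▸ h1, by rw [← h2]; rfl⟩
      · rintro ⟨a, ha, rfl⟩
        exact ⟨ha, rfl⟩
    rw [hmap, Finset.card_map, Fin.card_Iio]
  have hNoffid : 2 * Noff + k = k * k := by
    have h1 : (∑ i ∈ Finset.range k, i) * 2 = k * (k - 1) := Finset.sum_range_id_mul_two k
    have h2 : Noff = ∑ i ∈ Finset.range k, i := by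
      rw [hNoffsum]; exact Fin.sum_univ_eq_sum_range (fun i => i) k
    have h4 : ∀ K : ℕ, K * (K - 1) + K = K * K := by
      intro K
      cases K with
      | zero => rfl
      | succ K0 => simp [Nat.succ_sub_one]; ring
    linarith [h1, h2, h4 k]
  have hUsub : U ⊆ Finset.Icc 1 (m / 2) := Finset.filter_subset _ _
  have hUcard : U.card ≤ m / 2 := by
    refine le_trans (Finset.card_le_card hUsub) ?_
    rw [Nat.card_Icc]; omega
  have hTbig1 : finrank Fq (Submodule.span Fq Tbig)
      ≤ m * r + (U.card * (m * (k * k)) + finrank Fq (Submodule.span Fq Tmid)) := by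
    refine le_trans (finrank_span_union_le _ _) ?_
    exact add_le_add hT0 (le_trans (finrank_span_union_le _ _) (add_le_add (hbiU U) le_rfl))
  set A := finrank Fq (schurProd Fq (traceCode q m Fq C) (traceCode q m Fq C)) with hAdef
  have hfinal : 2 * A + m * (k * k) ≤ 2 * (m * r) + m * m * (k * k) := by
    by_cases hm2 : 2 * (m / 2) = m
    · have hTmideq : Tmid = Toff ∪ Tdiag := if_pos hm2
      have hmidb : finrank Fq (Submodule.span Fq Tmid) ≤ m * Noff + k * f := by
        rw [hTmideq]
        exact le_trans (finrank_span_union_le _ _) (add_le_add hToffb hTdiagb)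
      have hUlt : U.card < m / 2 := by
        have hmem : m / 2 ∈ Finset.Icc 1 (m / 2) := by
          rw [Finset.mem_Icc]; omega
        have hnot : m / 2 ∉ U := by
          show m / 2 ∉ (Finset.Icc 1 (m / 2)).filter fun l => 2 * l ≠ m
          rw [Finset.mem_filter]
          exact fun hc => hc.2 hm2
        have := Finset.card_lt_card ((Finset.ssubset_iff_of_subset hUsub).2 ⟨m / 2, hmem, hnot⟩)
        rwa [Nat.card_Icc, Nat.add_sub_cancel] at this
      have hfb : f ≤ m / 2 := finrank_fixedSub_le hq hq2 (show m / 2 ≠ 0 by omega)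
      set u := m / 2 with hu
      have h5 : m = 2 * u := by omega
      have h1n : 2 * A ≤ 2 * (m * r) + 2 * (U.card * (m * (k * k)))
          + 2 * (m * Noff) + 2 * (k * f) := by
        have hAA := le_trans hA hTbig1
        linarith [hAA, hmidb]
      have ha : 2 * (U.card + 1) * (m * (k * k)) ≤ 2 * u * (m * (k * k)) :=
        Nat.mul_le_mul_right _ (by omega)
      have hb : 2 * (m * Noff) + m * k = m * (k * k) := by
        calc 2 * (m * Noff) + m * k = m * (2 * Noff + k) := by ring
          _ = m * (k * k) := by rw [hNoffid]
      have hc : 2 * (k * f) ≤ m * k := by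
        calc 2 * (k * f) ≤ 2 * (k * u) := Nat.mul_le_mul_left _ (Nat.mul_le_mul_left _ hfb)
          _ = m * k := by rw [h5]; ring
      have hd : m * m * (k * k) = 2 * u * (m * (k * k)) := by
        nth_rewrite 1 [h5]; ring
      nlinarith [h1n, ha, hb, hc, hd]
    · have hTmideq : Tmid = (∅ : Set M) := if_neg hm2
      have hmidb : finrank Fq (Submodule.span Fq Tmid) = 0 := by
        rw [hTmideq]; simp
      set u := m / 2 with hu
      have h5 : m = 2 * u + 1 := by omega
      have h1n := le_trans hA hTbig1
      rw [hmidb] at h1n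
      have ha : (2 * U.card + 1) * (m * (k * k)) ≤ m * (m * (k * k)) :=
        Nat.mul_le_mul_right _ (by omega)
      nlinarith [h1n, ha]
  have c1 : ((m * k + 1).choose 2) * 2 = (m * k + 1) * (m * k) := by
    rw [Nat.choose_two_right, Nat.add_sub_cancel]
    exact Nat.div_mul_cancel (by rw [Nat.mul_comm]; exact (Nat.even_mul_succ_self (m * k)).two_dvd)
  have c2 : ((k + 1).choose 2) * 2 = (k + 1) * k := by
    rw [Nat.choose_two_right, Nat.add_sub_cancel]
    exact Nat.div_mul_cancel (by rw [Nat.mul_comm]; exact (Nat.even_mul_succ_self k).two_dvd)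
  have hz : (2 : ℤ) * A + m * (k * k) ≤ 2 * (m * r) + m * m * (k * k) := by exact_mod_cast hfinal
  have cz1 : ((m * k + 1).choose 2 : ℤ) * 2 = (m * k + 1) * (m * k) := by exact_mod_cast c1
  have cz2m : (m : ℤ) * (((k + 1).choose 2 : ℤ) * 2) = m * ((k + 1) * k) := by
    have cz2 : ((k + 1).choose 2 : ℤ) * 2 = (k + 1) * k := by exact_mod_cast c2
    rw [cz2]
  linarith [hz, cz1, cz2m]
end
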